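/- arXiv:1411.7246 — 2 statements merged into one kernel-verified Lean document; each statement's English description precedes it below -/
import Mathlib

section
/- Let α ∈ ℝ and β ≥ 0. There exists a constant C > 0 such that for all n ≥ 2, (∏_{k=2}^{n} k^{-α} (log k)^{β})^{1/n} ≤ C · n^{-α} (log n)^{β}. -/
/-!
The geometric mean factors as `(n!^{1/n})^{-α} · ((∏_{k=2}^n log k)^{1/n})^β`. Since
`(n/e)^n ≤ n! ≤ n^n`, the `n`-th root of `n!` lies in `[n/e, n]`, which costs at most a factor
`e^{|α|}` against `n^{-α}`. Each `log k` is at most `log n / log 2`, a number `≥ 1`, so the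
`n`-th root of the `n - 1` logarithms is at most `log n / log 2`: dividing by `log 2 < 1` pays
both for the missing factor and for `log n < 1` when `n = 2`.
-/

open Real Finset
open scoped Nat

lemma prod_Icc_two_natCast_eq_factorial (n : ℕ) : ∏ k ∈ Icc 2 n, (k : ℝ) = n ! := by
  induction n with
  | zero => simp
  | succ n ih =>
    rcases n with _ | n
    · simp
    rw [prod_Icc_succ_top (by omega), ih, Nat.factorial_succ (n + 1)]
    push_cast
    ring

lemma div_exp_one_le_factorial_rpow_inv {n : ℕ} (hn : n ≠ 0) :
    n / exp 1 ≤ (n ! : ℝ) ^ (n : ℝ)⁻¹ := by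
  rw [le_rpow_inv_iff_of_pos (by positivity) (by positivity) (by positivity), rpow_natCast,
    div_pow, exp_one_pow, div_le_iff₀ (exp_pos _), ← div_le_iff₀' (by positivity)]
  exact pow_div_factorial_le_exp _ n.cast_nonneg n

lemma factorial_rpow_inv_le {n : ℕ} (hn : n ≠ 0) : (n ! : ℝ) ^ (n : ℝ)⁻¹ ≤ n := by
  rw [rpow_inv_le_iff_of_pos (by positivity) (by positivity) (by positivity), rpow_natCast]
  exact_mod_cast Nat.factorial_le_pow n

lemma rpow_le_exp_abs_mul_rpow {x y : ℝ} (hx : 0 < x) (hxy : x ≤ y) (hyx : y / exp 1 ≤ x)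
    (a : ℝ) : x ^ a ≤ exp |a| * y ^ a := by
  have hy : 0 < y := hx.trans_le hxy
  have hlog : |log x - log y| ≤ 1 := by
    have hlow : log y - 1 ≤ log x := by
      simpa [log_div hy.ne' (exp_pos 1).ne'] using log_le_log (by positivity) hyx
    rw [abs_le]
    constructor <;> linarith [log_le_log hx hxy]
  rw [rpow_def_of_pos hx, rpow_def_of_pos hy, ← exp_add, exp_le_exp]
  calc log x * a = (log x - log y) * a + log y * a := by ring
    _ ≤ |log x - log y| * |a| + log y * a :=
        add_le_add_left ((le_abs_self _).trans (abs_mul _ _).le) _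
    _ ≤ |a| + log y * a := by nlinarith [abs_nonneg a]

lemma prod_Icc_two_log_rpow_inv_le {n : ℕ} (hn : 2 ≤ n) :
    (∏ k ∈ Icc 2 n, log k) ^ (n : ℝ)⁻¹ ≤ log n / log 2 := by
  have hlog2 : 0 < log 2 := log_pos one_lt_two
  have hlogn : log 2 ≤ log n := log_le_log two_pos (by exact_mod_cast hn)
  have hlog_le : ∀ k ∈ Icc 2 n, log k ≤ log n / log 2 := fun k hk => by
    obtain ⟨hk2, hkn⟩ := mem_Icc.1 hk
    calc log k ≤ log n := log_le_log (by positivity) (by exact_mod_cast hkn)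
      _ ≤ log n / log 2 :=
        le_div_self (hlog2.le.trans hlogn) hlog2 (log_two_lt_d9.le.trans (by norm_num))
  rw [rpow_inv_le_iff_of_pos (prod_nonneg fun k _ => log_natCast_nonneg k) (by positivity)
    (by positivity), rpow_natCast]
  calc ∏ k ∈ Icc 2 n, log (k : ℝ) ≤ ∏ _k ∈ Icc 2 n, log n / log 2 :=
        prod_le_prod (fun k _ => log_natCast_nonneg k) hlog_le
    _ = (log n / log 2) ^ #(Icc 2 n) := prod_const _
    _ ≤ (log n / log 2) ^ n :=
        pow_le_pow_right₀ ((one_le_div hlog2).2 hlogn) (by simp)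

lemma rpow_prod_rpow_mul_rpow {ι : Type*} {s : Finset ι} {f g : ι → ℝ}
    (hf : ∀ i ∈ s, 0 ≤ f i) (hg : ∀ i ∈ s, 0 ≤ g i) (a b r : ℝ) :
    (∏ i ∈ s, f i ^ a * g i ^ b) ^ r =
      ((∏ i ∈ s, f i) ^ r) ^ a * ((∏ i ∈ s, g i) ^ r) ^ b := by
  rw [prod_mul_distrib, finsetProd_rpow s f hf, finsetProd_rpow s g hg,
    mul_rpow (by positivity [prod_nonneg hf]) (by positivity [prod_nonneg hg]),
    ← rpow_mul (prod_nonneg hf), ← rpow_mul (prod_nonneg hf), ← rpow_mul (prod_nonneg hg),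
    ← rpow_mul (prod_nonneg hg), mul_comm a, mul_comm b]

/-- Geometric mean bound: (∏_{k=2}^n k^{-α}(log k)^β)^{1/n} ≤ C n^{-α}(log n)^β. -/
theorem stmt_1 (α β : ℝ) (hβ : 0 ≤ β) :
    ∃ C > (0 : ℝ), ∀ n : ℕ, 2 ≤ n →
      (∏ k ∈ Finset.Icc 2 n, ((k : ℝ) ^ (-α) * Real.log k ^ β)) ^ ((n : ℝ)⁻¹)
        ≤ C * ((n : ℝ) ^ (-α) * Real.log n ^ β) := by
  refine ⟨exp |α| / log 2 ^ β, by positivity [log_pos one_lt_two], fun n hn => ?_⟩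
  have hn0 : n ≠ 0 := by omega
  rw [rpow_prod_rpow_mul_rpow (fun k _ => k.cast_nonneg) (fun k _ => log_natCast_nonneg k),
    prod_Icc_two_natCast_eq_factorial]
  calc _ ≤ (exp |α| * (n : ℝ) ^ (-α)) * (log n / log 2) ^ β := by
        refine mul_le_mul ?_ ?_ (by positivity) (by positivity)
        · simpa only [abs_neg] using rpow_le_exp_abs_mul_rpow (by positivity)
            (factorial_rpow_inv_le hn0) (div_exp_one_le_factorial_rpow_inv hn0) (-α)
        · exact rpow_le_rpow (rpow_nonneg (prod_nonneg fun k _ => log_natCast_nonneg k) _)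
            (prod_Icc_two_log_rpow_inv_le hn) hβ
    _ = exp |α| / log 2 ^ β * ((n : ℝ) ^ (-α) * log n ^ β) := by
        rw [div_rpow (log_natCast_nonneg n) (log_pos one_lt_two).le]
        ring
end

section
/- Let X and Y be normed spaces of the same finite dimension m, and let T : X → Y be an invertible bounded linear operator. Then for every n with 1 ≤ n ≤ m, b_n(T) · c_{m−n+1}(T^{−1}) = 1. -/
/-! On a nonzero subspace `L`, the infimum of `‖T x‖ / ‖x‖` is the reciprocal of the norm of
`T⁻¹` restricted to `T L`; hence `b_n(T)` is the supremum of `‖T⁻¹|_M‖⁻¹` over the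
`n`-dimensional subspaces `M` of `Y`. In dimension `m` every subspace is closed and
`codim M < m - n + 1` means `dim M ≥ n`; as restricting to a smaller subspace can only lower
the norm, `c_{m-n+1}(T⁻¹)` is the infimum of `‖T⁻¹|_M‖` over the same `M`. These norms are at
least `‖T‖⁻¹ > 0`, so the supremum of their reciprocals is the reciprocal of their infimum. -/

/-- The `n`-th Bernstein number of a continuous linear operator:
`b_n(T) = sup over n-dimensional subspaces L of inf_{x ∈ L, x ≠ 0} ‖Tx‖/‖x‖`. -/
noncomputable def bernsteinNumber {X Y : Type*} [NormedAddCommGroup X] [NormedSpace ℝ X]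
    [NormedAddCommGroup Y] [NormedSpace ℝ Y] (T : X →L[ℝ] Y) (n : ℕ) : ℝ :=
  ⨆ L : {L : Submodule ℝ X // Module.finrank ℝ L = n},
    ⨅ x : {v : X // v ∈ L.1 ∧ v ≠ 0}, ‖T x.1‖ / ‖x.1‖

/-- The `n`-th Gelfand number:
`c_n(T) = inf { ‖T|_M‖ : M closed subspace of X with codim(M) < n }`. -/
noncomputable def gelfandNumber {X Y : Type*} [NormedAddCommGroup X] [NormedSpace ℝ X]
    [NormedAddCommGroup Y] [NormedSpace ℝ Y] (T : X →L[ℝ] Y) (n : ℕ) : ℝ :=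
  sInf {r : ℝ | ∃ M : Submodule ℝ X, IsClosed (M : Set X) ∧
    Module.finrank ℝ (X ⧸ M) < n ∧ r = ‖T.comp M.subtypeL‖}

open Module Submodule

lemma Submodule.exists_le_finrank_eq {K V : Type*} [DivisionRing K] [AddCommGroup V] [Module K V]
    (N : Submodule K V) {n : ℕ} (h : n ≤ finrank K N) :
    ∃ L ≤ N, finrank K L = n := by
  obtain ⟨f, hf⟩ := exists_linearIndependent_of_le_finrank h
  refine ⟨span K (Set.range (N.subtype ∘ f)), ?_, ?_⟩
  · exact span_le.mpr (Set.range_subset_iff.mpr fun i ↦ (f i).2)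
  · rw [finrank_span_eq_card (hf.map' N.subtype N.ker_subtype), Fintype.card_fin]

lemma Submodule.exists_finrank_eq {K V : Type*} [DivisionRing K] [AddCommGroup V] [Module K V]
    {n : ℕ} (h : n ≤ finrank K V) : ∃ L : Submodule K V, finrank K L = n :=
  let ⟨L, _, hL⟩ := (⊤ : Submodule K V).exists_le_finrank_eq (by rwa [finrank_top])
  ⟨L, hL⟩

lemma Real.iSup_inv_eq_inv_iInf {ι : Sort*} [Nonempty ι] {f : ι → ℝ} {a : ℝ} (ha : 0 < a)
    (hf : ∀ i, a ≤ f i) : ⨆ i, (f i)⁻¹ = (⨅ i, f i)⁻¹ := by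
  have hbdd : BddBelow (Set.range f) := ⟨a, Set.forall_mem_range.mpr hf⟩
  have hinf : 0 < ⨅ i, f i := ha.trans_le (le_ciInf hf)
  have hpos : ∀ i, 0 < f i := fun i ↦ ha.trans_le (hf i)
  have hbdd_inv : BddAbove (Set.range fun i ↦ (f i)⁻¹) :=
    ⟨a⁻¹, Set.forall_mem_range.mpr fun i ↦ inv_anti₀ ha (hf i)⟩
  obtain ⟨i₀⟩ := ‹Nonempty ι›
  have hsup : 0 < ⨆ i, (f i)⁻¹ := (inv_pos.mpr (hpos i₀)).trans_le (le_ciSup hbdd_inv i₀)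
  refine le_antisymm (ciSup_le fun i ↦ inv_anti₀ hinf (ciInf_le hbdd i)) ?_
  rw [inv_le_comm₀ hinf hsup]
  exact le_ciInf fun i ↦ (inv_le_comm₀ (hpos i) hsup).mp (le_ciSup hbdd_inv i)

lemma ContinuousLinearMap.norm_comp_subtypeL_mono {𝕜 E F : Type*} [NontriviallyNormedField 𝕜]
    [SeminormedAddCommGroup E] [NormedSpace 𝕜 E] [SeminormedAddCommGroup F] [NormedSpace 𝕜 F]
    (f : E →L[𝕜] F) {M N : Submodule 𝕜 E} (h : M ≤ N) :
    ‖f.comp M.subtypeL‖ ≤ ‖f.comp N.subtypeL‖ :=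
  (f.comp M.subtypeL).opNorm_le_bound (norm_nonneg _) fun x ↦ by
    simpa using (f.comp N.subtypeL).le_opNorm ⟨x, h x.2⟩

namespace ContinuousLinearEquiv

variable {𝕜 X Y : Type*} [NontriviallyNormedField 𝕜]
  [NormedAddCommGroup X] [NormedSpace 𝕜 X] [NormedAddCommGroup Y] [NormedSpace 𝕜 Y]

lemma inv_norm_le_norm_symm_comp_subtypeL (e : X ≃L[𝕜] Y) {M : Submodule 𝕜 Y}
    (hM : M ≠ ⊥) :
    ‖(e : X →L[𝕜] Y)‖⁻¹ ≤ ‖(e.symm : Y →L[𝕜] X).comp M.subtypeL‖ := by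
  have : Nontrivial M := nontrivial_iff_ne_bot.mpr hM
  have h1 : 1 ≤ ‖(e : X →L[𝕜] Y)‖ * ‖(e.symm : Y →L[𝕜] X).comp M.subtypeL‖ :=
    calc (1 : ℝ) = ‖M.subtypeL‖ := M.norm_subtypeL.symm
      _ = ‖(e : X →L[𝕜] Y).comp ((e.symm : Y →L[𝕜] X).comp M.subtypeL)‖ := by
        rw [← ContinuousLinearMap.comp_assoc, e.coe_comp_coe_symm, ContinuousLinearMap.id_comp]
      _ ≤ _ := ContinuousLinearMap.opNorm_comp_le _ _
  have he : 0 < ‖(e : X →L[𝕜] Y)‖ := pos_of_mul_pos_left (one_pos.trans_le h1) (norm_nonneg _)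
  exact (inv_le_iff_one_le_mul₀' he).mpr h1

lemma iInf_norm_div_norm_eq_inv_norm_symm_comp_subtypeL (e : X ≃L[𝕜] Y) {L : Submodule 𝕜 X}
    (hL : L ≠ ⊥) :
    ⨅ x : {v : X // v ∈ L ∧ v ≠ 0}, ‖e x.1‖ / ‖x.1‖ =
      ‖(e.symm : Y →L[𝕜] X).comp (L.map (e : X →ₗ[𝕜] Y)).subtypeL‖⁻¹ := by
  set S := (e.symm : Y →L[𝕜] X).comp (L.map (e : X →ₗ[𝕜] Y)).subtypeL
  set i := ⨅ x : {v : X // v ∈ L ∧ v ≠ 0}, ‖e x.1‖ / ‖x.1‖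
  obtain ⟨x₀, hx₀L, hx₀⟩ := exists_mem_ne_zero_of_ne_bot hL
  have : Nonempty {v : X // v ∈ L ∧ v ≠ 0} := ⟨⟨x₀, hx₀L, hx₀⟩⟩
  have hbdd :
      BddBelow (Set.range fun x : {v : X // v ∈ L ∧ v ≠ 0} ↦ ‖e x.1‖ / ‖x.1‖) :=
    ⟨0, Set.forall_mem_range.mpr fun _ ↦ by positivity⟩
  have hSx : ∀ x ∈ L, ‖x‖ ≤ ‖S‖ * ‖e x‖ := fun x hxL ↦ by
    simpa [S] using S.le_opNorm ⟨e x, mem_map_of_mem hxL⟩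
  have hS : 0 < ‖S‖ :=
    pos_of_mul_pos_left ((norm_pos_iff.mpr hx₀).trans_le (hSx x₀ hx₀L)) (norm_nonneg _)
  refine le_antisymm ?_ (le_ciInf fun ⟨x, hxL, hx⟩ ↦ ?_)
  · rcases (show 0 ≤ i from Real.iInf_nonneg fun _ ↦ by positivity).eq_or_lt with hi | hi
    · rw [← hi]; positivity
    rw [le_inv_comm₀ hi hS]
    refine S.opNorm_le_bound (by positivity) ?_
    rintro ⟨y, hy⟩
    obtain ⟨x, hxL, rfl⟩ := mem_map.mp hy
    have hSe : S ⟨_, hy⟩ = x := by simp [S]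
    rw [hSe, coe_norm, le_inv_mul_iff₀ hi]
    rcases eq_or_ne x 0 with rfl | hx
    · simp
    · exact (le_div_iff₀ (norm_pos_iff.mpr hx)).mp (ciInf_le hbdd ⟨x, hxL, hx⟩)
  · rw [le_div_iff₀ (norm_pos_iff.mpr hx)]
    exact inv_mul_le_of_le_mul₀ (norm_nonneg _) (norm_nonneg _) (hSx x hxL)

end ContinuousLinearEquiv

section

variable {X Y : Type*} [NormedAddCommGroup X] [NormedSpace ℝ X]
  [NormedAddCommGroup Y] [NormedSpace ℝ Y]

lemma bernsteinNumber_eq_iSup_inv_norm_symm_comp_subtypeL (e : X ≃L[ℝ] Y) {n : ℕ}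
    (hn : 1 ≤ n) :
    bernsteinNumber (e : X →L[ℝ] Y) n =
      ⨆ M : {M : Submodule ℝ Y // finrank ℝ M = n},
        ‖(e.symm : Y →L[ℝ] X).comp M.1.subtypeL‖⁻¹ := by
  let φ :
      {L : Submodule ℝ X // finrank ℝ L = n} ≃ {M : Submodule ℝ Y // finrank ℝ M = n} :=
    (orderIsoMapComap (e : X ≃ₗ[ℝ] Y)).toEquiv.subtypeEquiv fun L ↦ by
      rw [← LinearEquiv.finrank_map_eq (e : X ≃ₗ[ℝ] Y) L]
      rfl
  rw [← φ.iSup_comp]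
  refine iSup_congr fun ⟨L, hL⟩ ↦ ?_
  exact e.iInf_norm_div_norm_eq_inv_norm_symm_comp_subtypeL (L := L)
    (nontrivial_iff_ne_bot.mp (nontrivial_of_finrank_pos (R := ℝ) (by omega)))

lemma gelfandNumber_finrank_sub_add_one [FiniteDimensional ℝ X] (T : X →L[ℝ] Y) {n : ℕ}
    (hn : n ≤ finrank ℝ X) :
    gelfandNumber T (finrank ℝ X - n + 1) =
      ⨅ M : {M : Submodule ℝ X // finrank ℝ M = n}, ‖T.comp M.1.subtypeL‖ := by
  have hcodim (M : Submodule ℝ X) :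
      finrank ℝ (X ⧸ M) < finrank ℝ X - n + 1 ↔ n ≤ finrank ℝ M := by
    have := M.finrank_quotient_add_finrank
    have := M.finrank_le
    omega
  obtain ⟨L₀, hL₀⟩ := exists_finrank_eq (K := ℝ) (V := X) hn
  have : Nonempty {M : Submodule ℝ X // finrank ℝ M = n} := ⟨⟨L₀, hL₀⟩⟩
  have hbdd : BddBelow (Set.range fun M : {M : Submodule ℝ X // finrank ℝ M = n} ↦
      ‖T.comp M.1.subtypeL‖) := ⟨0, Set.forall_mem_range.mpr fun _ ↦ by positivity⟩
  refine le_antisymm (le_ciInf fun ⟨M, hM⟩ ↦ csInf_le ⟨0, ?_⟩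
    ⟨M, M.closed_of_finiteDimensional, (hcodim M).mpr hM.ge, rfl⟩)
    (le_csInf ⟨_, L₀, L₀.closed_of_finiteDimensional, (hcodim L₀).mpr hL₀.ge, rfl⟩ ?_)
  · rintro _ ⟨M, -, -, rfl⟩
    positivity
  · rintro _ ⟨M, -, hM, rfl⟩
    obtain ⟨L, hLM, hL⟩ := M.exists_le_finrank_eq ((hcodim M).mp hM)
    exact (ciInf_le hbdd ⟨L, hL⟩).trans (T.norm_comp_subtypeL_mono hLM)

end

theorem stmt_8_general {X Y : Type*} [NormedAddCommGroup X] [NormedSpace ℝ X]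
    [NormedAddCommGroup Y] [NormedSpace ℝ Y] (m : ℕ)
    (hY : Module.finrank ℝ Y = m)
    (e : X ≃L[ℝ] Y) (n : ℕ) (h1 : 1 ≤ n) (h2 : n ≤ m) :
    bernsteinNumber (e : X →L[ℝ] Y) n *
      gelfandNumber (e.symm : Y →L[ℝ] X) (m - n + 1) = 1 := by
  subst hY
  have : FiniteDimensional ℝ Y := .of_finrank_pos (by omega)
  have : Nontrivial Y := nontrivial_of_finrank_pos (R := ℝ) (by omega)
  have : Nontrivial X := e.toEquiv.nontrivial
  have : Nonempty {M : Submodule ℝ Y // finrank ℝ M = n} :=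
    nonempty_subtype.mpr (exists_finrank_eq h2)
  have hlow (M : {M : Submodule ℝ Y // finrank ℝ M = n}) :
      ‖(e : X →L[ℝ] Y)‖⁻¹ ≤ ‖(e.symm : Y →L[ℝ] X).comp M.1.subtypeL‖ :=
    e.inv_norm_le_norm_symm_comp_subtypeL
      (nontrivial_iff_ne_bot.mp (nontrivial_of_finrank_pos (R := ℝ) (by rw [M.2]; omega)))
  have hpos : 0 < ‖(e : X →L[ℝ] Y)‖⁻¹ := inv_pos.mpr e.norm_pos
  rw [bernsteinNumber_eq_iSup_inv_norm_symm_comp_subtypeL e h1,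
    gelfandNumber_finrank_sub_add_one _ h2, Real.iSup_inv_eq_inv_iInf hpos hlow]
  exact inv_mul_cancel₀ (hpos.trans_le (le_ciInf hlow)).ne'

/-- If dim X = dim Y = m and T : X → Y is invertible, then
b_n(T) · c_{m−n+1}(T⁻¹) = 1 for 1 ≤ n ≤ m. -/
theorem stmt_8 {X Y : Type*} [NormedAddCommGroup X] [NormedSpace ℝ X]
    [NormedAddCommGroup Y] [NormedSpace ℝ Y] (m : ℕ)
    (hX : Module.finrank ℝ X = m) (hY : Module.finrank ℝ Y = m)
    (e : X ≃L[ℝ] Y) (n : ℕ) (h1 : 1 ≤ n) (h2 : n ≤ m) :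
    bernsteinNumber (e : X →L[ℝ] Y) n *
      gelfandNumber (e.symm : Y →L[ℝ] X) (m - n + 1) = 1 :=
  stmt_8_general m hY e n h1 h2
end
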